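/- Bound on the number of equivalence classes: if the type A of positive atoms is finite and M has m elements, then the quotient of the type of events by the equivalence relation ~ has cardinality at most 2^m + 1. -/
import Mathlib


variable {A : Type*} [DecidableEq A]

/-- An event is consistent if no atom occurs both positively and negatively. -/
def consistentEvent (e : Finset (A ⊕ A)) : Prop :=
  ¬ ∃ a : A, Sum.inl a ∈ e ∧ Sum.inr a ∈ e

/-- The stable core of an event `e` w.r.t. the stable models `M`. -/
def sc (M : Finset (Finset (A ⊕ A))) (e : Finset (A ⊕ A)) : Finset (Finset (A ⊕ A)) :=
  M.filter (fun s => s ⊆ e ∨ e ⊆ s)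

/-- Two events are equivalent iff both are inconsistent, or both are
consistent with the same stable core. -/
def eqv (M : Finset (Finset (A ⊕ A))) (u v : Finset (A ⊕ A)) : Prop :=
  (¬ consistentEvent u ∧ ¬ consistentEvent v) ∨
    (consistentEvent u ∧ consistentEvent v ∧ sc M u = sc M v)

/-- with `A` finite and `m = M.card`, the quotient of the type of
events by `~` has at most `2 ^ m + 1` elements. -/
theorem card_quotient_le {A : Type*} [Fintype A] [DecidableEq A]
    (M : Finset (Finset (A ⊕ A))) :
    Nat.card (Quot (eqv M)) ≤ 2 ^ M.card + 1 := by
  classical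
  set f : Finset (A ⊕ A) → Option {s // s ∈ M.powerset} := fun e =>
    if h : consistentEvent e then
      some ⟨sc M e, by simp only [Finset.mem_powerset]; exact Finset.filter_subset _ _⟩
    else none with hf
  have hresp : ∀ u v, eqv M u v → f u = f v := by
    rintro u v (⟨hu, hv⟩ | ⟨hu, hv, hsc⟩)
    · simp [hf, hu, hv]
    · simp [hf, hu, hv, hsc]
  set g : Quot (eqv M) → Option {s // s ∈ M.powerset} := Quot.lift f hresp with hg
  have hinj : Function.Injective g := by
    intro x y
    refine Quot.induction_on x (fun u => Quot.induction_on y (fun v h => ?_))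
    apply Quot.sound
    simp only [hg, hf] at h
    by_cases hu : consistentEvent u <;> by_cases hv : consistentEvent v <;>
      simp [hu, hv] at h
    · exact Or.inr ⟨hu, hv, h⟩
    · exact Or.inl ⟨hu, hv⟩
  calc Nat.card (Quot (eqv M)) ≤ Nat.card (Option {s // s ∈ M.powerset}) :=
        Nat.card_le_card_of_injective g hinj
    _ = 2 ^ M.card + 1 := by
        rw [Nat.card_eq_fintype_card, Fintype.card_option, Fintype.card_coe,
          Finset.card_powerset]
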